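/- arXiv:0709.1295 — 8 statements merged into one kernel-verified Lean document; each statement's English description precedes it below -/
import Mathlib

section
/- Let k be a field and σ the k-algebra endomorphism of k(x,y) determined by σ(x) = -x(3x-9y-y²)³/(27x+2x²+9xy+2xy²-y³)² and σ(y) = -(3x+y²)(3x-9y-y²)/(27x+2x²+9xy+2xy²-y³). Then σ is an involution, i.e. σ² = identity on k(x,y). -/
open MvPolynomial

lemma aux_D (k : Type*) [Field k] :
    (27*X 0 + 2*(X 0)^2 + 9*X 0*X 1 + 2*X 0*(X 1)^2 - (X 1)^3 : MvPolynomial (Fin 2) k) ≠ 0 := by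
  intro h
  rw [show (27 : MvPolynomial (Fin 2) k) = C (27:k) from map_ofNat C 27,
      show (9 : MvPolynomial (Fin 2) k) = C (9:k) from map_ofNat C 9,
      show (2 : MvPolynomial (Fin 2) k) = C (2:k) from map_ofNat C 2] at h
  have h2 := congrArg (coeff (Finsupp.single 1 3)) h
  simp only [coeff_sub, coeff_add, C_apply, X_pow_eq_monomial, X, monomial_mul, monomial_pow,
    mul_assoc, coeff_monomial, coeff_zero, Finsupp.ext_iff, Fin.forall_fin_two,
    Finsupp.add_apply, Finsupp.single_apply, Finsupp.zero_apply] at h2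
  norm_num at h2

lemma aux_N (k : Type*) [Field k] :
    (3*X 0 - 9*X 1 - (X 1)^2 : MvPolynomial (Fin 2) k) ≠ 0 := by
  intro h
  rw [show (9 : MvPolynomial (Fin 2) k) = C (9:k) from map_ofNat C 9,
      show (3 : MvPolynomial (Fin 2) k) = C (3:k) from map_ofNat C 3] at h
  have h2 := congrArg (coeff (Finsupp.single 1 2)) h
  simp only [coeff_sub, coeff_C_mul, coeff_X_pow, coeff_X', coeff_zero,
    Finsupp.single_eq_single_iff] at h2
  norm_num at h2

lemma aux_E (k : Type*) [Field k] :
    (27*X 0 + 9*X 0*X 1 + (X 1)^3 : MvPolynomial (Fin 2) k) ≠ 0 := by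
  intro h
  rw [show (27 : MvPolynomial (Fin 2) k) = C (27:k) from map_ofNat C 27,
      show (9 : MvPolynomial (Fin 2) k) = C (9:k) from map_ofNat C 9] at h
  have h2 := congrArg (coeff (Finsupp.single 1 3)) h
  simp only [coeff_add, C_apply, X_pow_eq_monomial, X, monomial_mul, monomial_pow,
    mul_assoc, coeff_monomial, coeff_zero, Finsupp.ext_iff, Fin.forall_fin_two,
    Finsupp.add_apply, Finsupp.single_apply, Finsupp.zero_apply] at h2
  norm_num at h2

set_option maxHeartbeats 4000000 in
/-- the Cremona map σ on k(x,y) is an involution. -/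
theorem stmt_0 (k : Type*) [Field k]
    (σ : FractionRing (MvPolynomial (Fin 2) k) →ₐ[k] FractionRing (MvPolynomial (Fin 2) k))
    (x y : FractionRing (MvPolynomial (Fin 2) k))
    (hx : x = algebraMap (MvPolynomial (Fin 2) k) _ (X 0))
    (hy : y = algebraMap (MvPolynomial (Fin 2) k) _ (X 1))
    (hσx : σ x = -x * (3*x - 9*y - y^2)^3 / (27*x + 2*x^2 + 9*x*y + 2*x*y^2 - y^3)^2)
    (hσy : σ y = -(3*x + y^2) * (3*x - 9*y - y^2) / (27*x + 2*x^2 + 9*x*y + 2*x*y^2 - y^3)) :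
    σ.comp σ = AlgHom.id k (FractionRing (MvPolynomial (Fin 2) k)) := by
  have hinj : Function.Injective
      (algebraMap (MvPolynomial (Fin 2) k) (FractionRing (MvPolynomial (Fin 2) k))) :=
    IsFractionRing.injective _ _
  -- nonvanishing of the three key polynomials
  have hD : 27*x + 2*x^2 + 9*x*y + 2*x*y^2 - y^3 ≠ 0 := by
    have hDD : (27*x + 2*x^2 + 9*x*y + 2*x*y^2 - y^3)
        = algebraMap (MvPolynomial (Fin 2) k) (FractionRing (MvPolynomial (Fin 2) k))
          (27*X 0 + 2*(X 0)^2 + 9*X 0*X 1 + 2*X 0*(X 1)^2 - (X 1)^3) := by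
      rw [hx, hy]; simp only [map_add, map_sub, map_mul, map_pow, map_ofNat]
    rw [hDD]
    exact (map_ne_zero_iff _ hinj).mpr (aux_D k)
  have hN : 3*x - 9*y - y^2 ≠ 0 := by
    have hNN : (3*x - 9*y - y^2)
        = algebraMap (MvPolynomial (Fin 2) k) (FractionRing (MvPolynomial (Fin 2) k))
          (3*X 0 - 9*X 1 - (X 1)^2) := by
      rw [hx, hy]; simp only [map_sub, map_mul, map_pow, map_ofNat]
    rw [hNN]
    exact (map_ne_zero_iff _ hinj).mpr (aux_N k)
  have hE : 27*x + 9*x*y + y^3 ≠ 0 := by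
    have hEE : (27*x + 9*x*y + y^3)
        = algebraMap (MvPolynomial (Fin 2) k) (FractionRing (MvPolynomial (Fin 2) k))
          (27*X 0 + 9*X 0*X 1 + (X 1)^3) := by
      rw [hx, hy]; simp only [map_add, map_mul, map_pow, map_ofNat]
    rw [hEE]
    exact (map_ne_zero_iff _ hinj).mpr (aux_E k)
  -- the images of N, M, D under σ
  have keyN : 3*σ x - 9*σ y - σ y^2
      = (3*x - 9*y - y^2)*(27*x + 9*x*y + y^3)^2/(27*x + 2*x^2 + 9*x*y + 2*x*y^2 - y^3)^2 := by
    rw [hσx, hσy]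
    obtain ⟨n, hgn⟩ : ∃ n, 3*x - 9*y - y^2 = n := ⟨_, rfl⟩
    obtain ⟨m, hgm⟩ : ∃ m, 3*x + y^2 = m := ⟨_, rfl⟩
    obtain ⟨d, hgd⟩ : ∃ d, 27*x + 2*x^2 + 9*x*y + 2*x*y^2 - y^3 = d := ⟨_, rfl⟩
    obtain ⟨e, hge⟩ : ∃ e, 27*x + 9*x*y + y^3 = e := ⟨_, rfl⟩
    rw [hgd] at hD
    have h9 : -3*x*n^2 + 9*m*d - m^2*n = e^2 := by
      rw [← hgn, ← hgm, ← hgd, ← hge]; ring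
    rw [hgn, hgm, hgd, hge]
    have hA : 3*(-x*n^3/d^2) - 9*(-m*n/d) - (-m*n/d)^2
        = n*(-3*x*n^2 + 9*m*d - m^2*n)/d^2 := by
      field_simp; ring
    rw [hA, h9]
  have keyM : 3*σ x + σ y^2
      = y*(3*x - 9*y - y^2)^2*(27*x + 9*x*y + y^3)/(27*x + 2*x^2 + 9*x*y + 2*x*y^2 - y^3)^2 := by
    rw [hσx, hσy]
    obtain ⟨n, hgn⟩ : ∃ n, 3*x - 9*y - y^2 = n := ⟨_, rfl⟩
    obtain ⟨m, hgm⟩ : ∃ m, 3*x + y^2 = m := ⟨_, rfl⟩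
    obtain ⟨d, hgd⟩ : ∃ d, 27*x + 2*x^2 + 9*x*y + 2*x*y^2 - y^3 = d := ⟨_, rfl⟩
    obtain ⟨e, hge⟩ : ∃ e, 27*x + 9*x*y + y^3 = e := ⟨_, rfl⟩
    rw [hgd] at hD
    have h9 : m^2 - 3*x*n = y*e := by
      rw [← hgn, ← hgm, ← hge]; ring
    rw [hgn, hgm, hgd, hge]
    have hA : 3*(-x*n^3/d^2) + (-m*n/d)^2 = n^2*(m^2 - 3*x*n)/d^2 := by
      field_simp; ring
    rw [hA, h9]
    field_simp
  have keyD : 27*σ x + 2*σ x^2 + 9*σ x*σ y + 2*σ x*σ y^2 - σ y^3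
      = -((3*x - 9*y - y^2)*(27*x + 9*x*y + y^3))^3/(27*x + 2*x^2 + 9*x*y + 2*x*y^2 - y^3)^4 := by
    rw [hσx, hσy]
    obtain ⟨n, hgn⟩ : ∃ n, 3*x - 9*y - y^2 = n := ⟨_, rfl⟩
    obtain ⟨m, hgm⟩ : ∃ m, 3*x + y^2 = m := ⟨_, rfl⟩
    obtain ⟨d, hgd⟩ : ∃ d, 27*x + 2*x^2 + 9*x*y + 2*x*y^2 - y^3 = d := ⟨_, rfl⟩
    obtain ⟨e, hge⟩ : ∃ e, 27*x + 9*x*y + y^3 = e := ⟨_, rfl⟩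
    rw [hgd] at hD
    have h9 : -27*x*d^2 + 2*x^2*n^3 + 9*x*m*n*d - 2*x*m^2*n^2 + m^3*d = -e^3 := by
      rw [← hgn, ← hgm, ← hgd, ← hge]; ring
    rw [hgn, hgm, hgd, hge]
    have hA : 27*(-x*n^3/d^2) + 2*(-x*n^3/d^2)^2 + 9*(-x*n^3/d^2)*(-m*n/d)
        + 2*(-x*n^3/d^2)*(-m*n/d)^2 - (-m*n/d)^3
        = n^3*(-27*x*d^2 + 2*x^2*n^3 + 9*x*m*n*d - 2*x*m^2*n^2 + m^3*d)/d^4 := by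
      simp only [div_pow, div_mul_div_comm, mul_div_assoc']
      rw [div_add_div _ _ (by simp [hD]) (by simp [hD]), div_add_div _ _ (by simp [hD]) (by simp [hD]),
          div_add_div _ _ (by simp [hD]) (by simp [hD]), div_sub_div _ _ (by simp [hD]) (by simp [hD]),
          div_eq_div_iff (by simp [hD]) (pow_ne_zero 4 hD)]
      field_simp
      ring
    rw [hA, h9]
    field_simp
  -- σ is an involution on x and y
  have step : σ (σ x) = -σ x * (3*σ x - 9*σ y - σ y^2)^3
      / (27*σ x + 2*σ x^2 + 9*σ x*σ y + 2*σ x*σ y^2 - σ y^3)^2 := by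
    conv_lhs => rw [hσx]
    simp only [map_div₀, map_mul, map_neg, map_pow, map_sub, map_add, map_ofNat]
  have step2 : σ (σ y) = -(3*σ x + σ y^2) * (3*σ x - 9*σ y - σ y^2)
      / (27*σ x + 2*σ x^2 + 9*σ x*σ y + 2*σ x*σ y^2 - σ y^3) := by
    conv_lhs => rw [hσy]
    simp only [map_div₀, map_mul, map_neg, map_pow, map_sub, map_add, map_ofNat]
  have hx2 : σ (σ x) = x := by
    rw [step, keyN, keyD, hσx]
    obtain ⟨n, hgn⟩ : ∃ n, 3*x - 9*y - y^2 = n := ⟨_, rfl⟩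
    obtain ⟨d, hgd⟩ : ∃ d, 27*x + 2*x^2 + 9*x*y + 2*x*y^2 - y^3 = d := ⟨_, rfl⟩
    obtain ⟨e, hge⟩ : ∃ e, 27*x + 9*x*y + y^3 = e := ⟨_, rfl⟩
    rw [hgd] at hD; rw [hgn] at hN; rw [hge] at hE
    rw [hgn, hgd, hge]
    field_simp
  have hy2 : σ (σ y) = y := by
    rw [step2, keyN, keyM, keyD]
    obtain ⟨n, hgn⟩ : ∃ n, 3*x - 9*y - y^2 = n := ⟨_, rfl⟩
    obtain ⟨d, hgd⟩ : ∃ d, 27*x + 2*x^2 + 9*x*y + 2*x*y^2 - y^3 = d := ⟨_, rfl⟩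
    obtain ⟨e, hge⟩ : ∃ e, 27*x + 9*x*y + y^3 = e := ⟨_, rfl⟩
    rw [hgd] at hD; rw [hgn] at hN; rw [hge] at hE
    rw [hgn, hgd, hge]
    field_simp
  -- conclude by extensionality
  have hpoly : ((σ.comp σ).comp (IsScalarTower.toAlgHom k (MvPolynomial (Fin 2) k)
        (FractionRing (MvPolynomial (Fin 2) k))))
      = IsScalarTower.toAlgHom k (MvPolynomial (Fin 2) k)
        (FractionRing (MvPolynomial (Fin 2) k)) := by
    apply MvPolynomial.algHom_ext
    intro i
    fin_cases i
    · simp only [AlgHom.comp_apply, IsScalarTower.coe_toAlgHom']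
      exact hx ▸ hx2
    · simp only [AlgHom.comp_apply, IsScalarTower.coe_toAlgHom']
      exact hy ▸ hy2
  have hring : (σ.comp σ).toRingHom
      = (AlgHom.id k (FractionRing (MvPolynomial (Fin 2) k))).toRingHom := by
    apply IsLocalization.ringHom_ext (nonZeroDivisors (MvPolynomial (Fin 2) k))
    refine RingHom.ext fun p => ?_
    have h3 := AlgHom.congr_fun hpoly p
    simpa [IsScalarTower.coe_toAlgHom'] using h3
  exact AlgHom.coe_ringHom_injective hring
end

section
/- With y₁ = 3x₁-9x₂-x₂², y₂ = 27x₁+9x₁x₂+x₂³, y₃ = -27x₁-2x₁²-9x₁x₂-2x₁x₂²+x₂³ in k(x₁,x₂), and σ the involution sending x₁ ↦ -x₁(3x₁-9x₂-x₂²)³/(27x₁+2x₁²+9x₁x₂+2x₁x₂²-x₂³)², x₂ ↦ -(3x₁+x₂²)(3x₁-9x₂-x₂²)/(27x₁+2x₁²+9x₁x₂+2x₁x₂²-x₂³), we have σ(y₁) = y₁y₂²y₃⁻², σ(y₂) = y₁³y₂²y₃⁻³, and σ(y₃) = y₁³y₂³y₃⁻⁴. -/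
open MvPolynomial

set_option maxHeartbeats 1000000
set_option synthInstance.maxHeartbeats 400000

private lemma comb1 {F : Type*} [Field F] (a b d : F) (hd : d ≠ 0) :
    3 * (a / d ^ 2) - 9 * (b / d) - (b / d) ^ 2
      = (3 * a - 9 * b * d - b ^ 2) / d ^ 2 := by
  have ha : a = (a / d ^ 2) * d ^ 2 := (div_mul_cancel₀ a (pow_ne_zero 2 hd)).symm
  have hb : b = (b / d) * d := (div_mul_cancel₀ b hd).symm
  rw [eq_div_iff (pow_ne_zero 2 hd)]
  conv_rhs => rw [ha, hb]
  ring

private lemma comb2 {F : Type*} [Field F] (a b d : F) (hd : d ≠ 0) :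
    27 * (a / d ^ 2) + 9 * (a / d ^ 2) * (b / d) + (b / d) ^ 3
      = (27 * a * d + 9 * a * b + b ^ 3) / d ^ 3 := by
  have ha : a = (a / d ^ 2) * d ^ 2 := (div_mul_cancel₀ a (pow_ne_zero 2 hd)).symm
  have hb : b = (b / d) * d := (div_mul_cancel₀ b hd).symm
  rw [eq_div_iff (pow_ne_zero 3 hd)]
  conv_rhs => rw [ha, hb]
  ring

private lemma comb3 {F : Type*} [Field F] (a b d : F) (hd : d ≠ 0) :
    -27 * (a / d ^ 2) - 2 * (a / d ^ 2) ^ 2 - 9 * (a / d ^ 2) * (b / d)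
        - 2 * (a / d ^ 2) * (b / d) ^ 2 + (b / d) ^ 3
      = (-27 * a * d ^ 2 - 2 * a ^ 2 - 9 * a * b * d - 2 * a * b ^ 2 + b ^ 3 * d) / d ^ 4 := by
  have ha : a = (a / d ^ 2) * d ^ 2 := (div_mul_cancel₀ a (pow_ne_zero 2 hd)).symm
  have hb : b = (b / d) * d := (div_mul_cancel₀ b hd).symm
  rw [eq_div_iff (pow_ne_zero 4 hd)]
  conv_rhs => rw [ha, hb]
  ring

/-- action of σ on y₁, y₂, y₃. -/
theorem stmt_1 (k : Type*) [Field k]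
    (σ : FractionRing (MvPolynomial (Fin 2) k) ≃ₐ[k] FractionRing (MvPolynomial (Fin 2) k))
    (hinv : ∀ f, σ (σ f) = f)
    (x₁ x₂ : FractionRing (MvPolynomial (Fin 2) k))
    (hx₁ : x₁ = algebraMap (MvPolynomial (Fin 2) k) _ (X 0))
    (hx₂ : x₂ = algebraMap (MvPolynomial (Fin 2) k) _ (X 1))
    (hσx₁ : σ x₁ = -x₁ * (3*x₁ - 9*x₂ - x₂^2)^3 / (27*x₁ + 2*x₁^2 + 9*x₁*x₂ + 2*x₁*x₂^2 - x₂^3)^2)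
    (hσx₂ : σ x₂ = -(3*x₁ + x₂^2) * (3*x₁ - 9*x₂ - x₂^2) / (27*x₁ + 2*x₁^2 + 9*x₁*x₂ + 2*x₁*x₂^2 - x₂^3))
    (y₁ y₂ y₃ : FractionRing (MvPolynomial (Fin 2) k))
    (hy₁ : y₁ = 3*x₁ - 9*x₂ - x₂^2)
    (hy₂ : y₂ = 27*x₁ + 9*x₁*x₂ + x₂^3)
    (hy₃ : y₃ = -27*x₁ - 2*x₁^2 - 9*x₁*x₂ - 2*x₁*x₂^2 + x₂^3) :
    σ y₁ = y₁ * y₂^2 * (y₃⁻¹)^2 ∧ σ y₂ = y₁^3 * y₂^2 * (y₃⁻¹)^3 ∧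
      σ y₃ = y₁^3 * y₂^3 * (y₃⁻¹)^4 := by
  have hinj := IsFractionRing.injective (MvPolynomial (Fin 2) k)
      (FractionRing (MvPolynomial (Fin 2) k))
  have hD : (27*x₁ + 2*x₁^2 + 9*x₁*x₂ + 2*x₁*x₂^2 - x₂^3) ≠ 0 := by
    set p : MvPolynomial (Fin 2) k :=
      27*X 0 + 2*(X 0)^2 + 9*(X 0)*(X 1) + 2*(X 0)*(X 1)^2 - (X 1)^3 with hp
    have hpne : p ≠ 0 := by
      intro h
      have := congrArg (eval (![0,1] : Fin 2 → k)) h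
      simp [hp] at this
    have hDp : (27*x₁ + 2*x₁^2 + 9*x₁*x₂ + 2*x₁*x₂^2 - x₂^3)
        = algebraMap (MvPolynomial (Fin 2) k) _ p := by
      simp only [hx₁, hx₂, hp, map_add, map_sub, map_mul, map_pow, map_ofNat]
    rw [hDp]
    intro h
    exact hpne (hinj (by simpa using h))
  have hy₃ne : (-27*x₁ - 2*x₁^2 - 9*x₁*x₂ - 2*x₁*x₂^2 + x₂^3) ≠ 0 := by
    intro h; apply hD; linear_combination -h
  have h1 : σ (3*x₁ - 9*x₂ - x₂^2) * ((-27*x₁ - 2*x₁^2 - 9*x₁*x₂ - 2*x₁*x₂^2 + x₂^3)^2)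
      = (3*x₁ - 9*x₂ - x₂^2) * (27*x₁ + 9*x₁*x₂ + x₂^3)^2 := by
    simp only [map_sub, map_add, map_mul, map_neg, map_pow, map_ofNat]
    rw [hσx₁, hσx₂, comb1 _ _ _ hD, div_mul_eq_mul_div, div_eq_iff (pow_ne_zero 2 hD)]
    ring
  have h2 : σ (27*x₁ + 9*x₁*x₂ + x₂^3) * ((-27*x₁ - 2*x₁^2 - 9*x₁*x₂ - 2*x₁*x₂^2 + x₂^3)^3)
      = (3*x₁ - 9*x₂ - x₂^2)^3 * (27*x₁ + 9*x₁*x₂ + x₂^3)^2 := by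
    simp only [map_sub, map_add, map_mul, map_neg, map_pow, map_ofNat]
    rw [hσx₁, hσx₂, comb2 _ _ _ hD, div_mul_eq_mul_div, div_eq_iff (pow_ne_zero 3 hD)]
    ring
  have h3 : σ (-27*x₁ - 2*x₁^2 - 9*x₁*x₂ - 2*x₁*x₂^2 + x₂^3)
        * ((-27*x₁ - 2*x₁^2 - 9*x₁*x₂ - 2*x₁*x₂^2 + x₂^3)^4)
      = (3*x₁ - 9*x₂ - x₂^2)^3 * (27*x₁ + 9*x₁*x₂ + x₂^3)^3 := by
    simp only [map_sub, map_add, map_mul, map_neg, map_pow, map_ofNat]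
    rw [hσx₁, hσx₂, comb3 _ _ _ hD, div_mul_eq_mul_div, div_eq_iff (pow_ne_zero 4 hD)]
    ring
  refine ⟨?_, ?_, ?_⟩
  · rw [hy₁, hy₂, hy₃, inv_pow]
    exact (eq_mul_inv_iff_mul_eq₀ (pow_ne_zero 2 hy₃ne)).mpr h1
  · rw [hy₁, hy₂, hy₃, inv_pow]
    exact (eq_mul_inv_iff_mul_eq₀ (pow_ne_zero 3 hy₃ne)).mpr h2
  · rw [hy₁, hy₂, hy₃, inv_pow]
    exact (eq_mul_inv_iff_mul_eq₀ (pow_ne_zero 4 hy₃ne)).mpr h3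
end

section
/- Let k be a field of characteristic ≠ 2, 3. With y₁ = 3x₁-9x₂-x₂², y₂ = 27x₁+9x₁x₂+x₂³, y₃ = -27x₁-2x₁²-9x₁x₂-2x₁x₂²+x₂³, the identities x₁ = (-2y₁³-729y₂+27y₁y₂-2y₂²-729y₃+27y₁y₃)/(108(y₂+y₃)) and x₂ = (-2y₁⁴+9y₁²y₂-2y₁y₂²+9y₁²y₃+81y₂y₃+81y₃²)/(18(y₁³-y₂y₃)) hold in k(x₁,x₂); in particular k(y₁,y₂,y₃) = k(x₁,x₂). -/
open MvPolynomial IntermediateField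

set_option maxHeartbeats 2000000

private lemma aux_d1_ne_zero (k : Type*) [Field k] :
    ((X 0)^2 + (X 0)*(X 1)^2 - (X 1)^3 : MvPolynomial (Fin 2) k) ≠ 0 := by
  intro h
  have hq := congrArg (aeval (R := k) (S₁ := Polynomial k)
    (fun i : Fin 2 => if i = 0 then Polynomial.X else 0)) h
  simp at hq

private lemma aux_d2_ne_zero (k : Type*) [Field k] (h3 : (3 : k) ≠ 0) :
    ((3*X 0 - 9*X 1 - (X 1)^2)^3 -
      (27*X 0 + 9*(X 0)*(X 1) + (X 1)^3) *
      (-27*X 0 - 2*(X 0)^2 - 9*(X 0)*(X 1) - 2*(X 0)*(X 1)^2 + (X 1)^3)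
      : MvPolynomial (Fin 2) k) ≠ 0 := by
  intro h
  have hq := congrArg (aeval (R := k) (S₁ := Polynomial k)
    (fun i : Fin 2 => if i = 0 then Polynomial.X else 0)) h
  simp at hq
  rw [show ((3:Polynomial k)*Polynomial.X)^3 - 27*Polynomial.X *
      (-(27*Polynomial.X) - 2*Polynomial.X^2) = 729*Polynomial.X^2 + 81*Polynomial.X^3
      from by ring] at hq
  have h4 := congrArg (Polynomial.coeff · 2) hq
  simp [Polynomial.coeff_X_pow] at h4
  have h6 : (3:k)^6 = 0 := by rw [show ((3:k)^6 = 729) from by norm_num]; exact h4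
  exact h3 ((pow_eq_zero_iff (by norm_num)).mp h6)

/-- recovering x₁, x₂ from y₁, y₂, y₃; k(y₁,y₂,y₃) = k(x₁,x₂). -/
theorem stmt_2 (k : Type*) [Field k] (h2 : (2 : k) ≠ 0) (h3 : (3 : k) ≠ 0)
    (x₁ x₂ : FractionRing (MvPolynomial (Fin 2) k))
    (hx₁ : x₁ = algebraMap (MvPolynomial (Fin 2) k) _ (X 0))
    (hx₂ : x₂ = algebraMap (MvPolynomial (Fin 2) k) _ (X 1))
    (y₁ y₂ y₃ : FractionRing (MvPolynomial (Fin 2) k))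
    (hy₁ : y₁ = 3*x₁ - 9*x₂ - x₂^2)
    (hy₂ : y₂ = 27*x₁ + 9*x₁*x₂ + x₂^3)
    (hy₃ : y₃ = -27*x₁ - 2*x₁^2 - 9*x₁*x₂ - 2*x₁*x₂^2 + x₂^3) :
    x₁ = (-2*y₁^3 - 729*y₂ + 27*y₁*y₂ - 2*y₂^2 - 729*y₃ + 27*y₁*y₃) / (108*(y₂ + y₃)) ∧
    x₂ = (-2*y₁^4 + 9*y₁^2*y₂ - 2*y₁*y₂^2 + 9*y₁^2*y₃ + 81*y₂*y₃ + 81*y₃^2) /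
        (18*(y₁^3 - y₂*y₃)) ∧
    IntermediateField.adjoin k {y₁, y₂, y₃} = IntermediateField.adjoin k {x₁, x₂} := by
  have inj : Function.Injective
      (algebraMap (MvPolynomial (Fin 2) k) (FractionRing (MvPolynomial (Fin 2) k))) :=
    IsFractionRing.injective _ _
  have hmapne : ∀ p : MvPolynomial (Fin 2) k, p ≠ 0 →
      algebraMap (MvPolynomial (Fin 2) k) (FractionRing (MvPolynomial (Fin 2) k)) p ≠ 0 :=
    fun p hp => (map_ne_zero_iff _ inj).mpr hp
  have h2K : (2 : FractionRing (MvPolynomial (Fin 2) k)) ≠ 0 := by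
    rw [show (2 : FractionRing (MvPolynomial (Fin 2) k)) =
        algebraMap (MvPolynomial (Fin 2) k) _ 2 from (map_ofNat _ 2).symm]
    refine hmapne _ ?_
    rw [show (2 : MvPolynomial (Fin 2) k) = C (2:k) from (map_ofNat (C : k →+* _) 2).symm]
    simpa using h2
  have h3K : (3 : FractionRing (MvPolynomial (Fin 2) k)) ≠ 0 := by
    rw [show (3 : FractionRing (MvPolynomial (Fin 2) k)) =
        algebraMap (MvPolynomial (Fin 2) k) _ 3 from (map_ofNat _ 3).symm]
    refine hmapne _ ?_
    rw [show (3 : MvPolynomial (Fin 2) k) = C (3:k) from (map_ofNat (C : k →+* _) 3).symm]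
    simpa using h3
  have e1 : (108 : FractionRing (MvPolynomial (Fin 2) k))*(y₂+y₃) =
      -216 * algebraMap (MvPolynomial (Fin 2) k) _ ((X 0)^2 + (X 0)*(X 1)^2 - (X 1)^3) := by
    rw [hy₂, hy₃, hx₁, hx₂]
    simp only [map_add, map_sub, map_mul, map_pow]
    ring
  have e2 : (18 : FractionRing (MvPolynomial (Fin 2) k))*(y₁^3 - y₂*y₃) =
      18 * algebraMap (MvPolynomial (Fin 2) k) _ ((3*X 0 - 9*X 1 - (X 1)^2)^3 -
      (27*X 0 + 9*(X 0)*(X 1) + (X 1)^3) *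
      (-27*X 0 - 2*(X 0)^2 - 9*(X 0)*(X 1) - 2*(X 0)*(X 1)^2 + (X 1)^3)) := by
    rw [hy₁, hy₂, hy₃, hx₁, hx₂]
    simp only [map_add, map_sub, map_mul, map_pow, map_neg, map_ofNat]
    try ring
  have hD1 : (108 : FractionRing (MvPolynomial (Fin 2) k))*(y₂+y₃) ≠ 0 := by
    rw [e1]
    refine mul_ne_zero ?_ (hmapne _ (aux_d1_ne_zero k))
    rw [show (-216 : FractionRing (MvPolynomial (Fin 2) k)) = -(2^3*3^3) from by norm_num]
    exact neg_ne_zero.mpr (mul_ne_zero (pow_ne_zero _ h2K) (pow_ne_zero _ h3K))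
  have hD2 : (18 : FractionRing (MvPolynomial (Fin 2) k))*(y₁^3 - y₂*y₃) ≠ 0 := by
    rw [e2]
    refine mul_ne_zero ?_ (hmapne _ (aux_d2_ne_zero k h3))
    rw [show (18 : FractionRing (MvPolynomial (Fin 2) k)) = 2*3^2 from by norm_num]
    exact mul_ne_zero h2K (pow_ne_zero _ h3K)
  have hid1 : x₁ = (-2*y₁^3 - 729*y₂ + 27*y₁*y₂ - 2*y₂^2 - 729*y₃ + 27*y₁*y₃) /
      (108*(y₂ + y₃)) := by
    rw [eq_div_iff hD1, hy₁, hy₂, hy₃]; ring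
  have hid2 : x₂ = (-2*y₁^4 + 9*y₁^2*y₂ - 2*y₁*y₂^2 + 9*y₁^2*y₃ + 81*y₂*y₃ + 81*y₃^2) /
      (18*(y₁^3 - y₂*y₃)) := by
    rw [eq_div_iff hD2, hy₁, hy₂, hy₃]; ring
  refine ⟨hid1, hid2, le_antisymm ?_ ?_⟩
  · have hx1F : x₁ ∈ adjoin k {x₁, x₂} := subset_adjoin k _ (by left; rfl)
    have hx2F : x₂ ∈ adjoin k {x₁, x₂} := subset_adjoin k _ (by right; rfl)
    have hofn : ∀ (n : ℕ), ((n : FractionRing (MvPolynomial (Fin 2) k)) ∈ adjoin k {x₁, x₂}) :=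
      fun n => (adjoin k {x₁, x₂}).natCast_mem n
    rw [adjoin_le_iff]
    rintro z hz
    simp only [Set.mem_insert_iff, Set.mem_singleton_iff] at hz
    rcases hz with rfl | rfl | rfl
    · rw [hy₁]
      refine sub_mem (sub_mem (mul_mem ?_ hx1F) (mul_mem ?_ hx2F)) (pow_mem hx2F 2)
      · simpa using hofn 3
      · simpa using hofn 9
    · rw [hy₂]
      refine add_mem (add_mem (mul_mem ?_ hx1F) (mul_mem (mul_mem ?_ hx1F) hx2F))
        (pow_mem hx2F 3)
      · simpa using hofn 27
      · simpa using hofn 9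
    · rw [hy₃]
      refine add_mem (sub_mem (sub_mem (sub_mem (mul_mem (neg_mem ?_) hx1F)
        (mul_mem ?_ (pow_mem hx1F 2))) (mul_mem (mul_mem ?_ hx1F) hx2F))
        (mul_mem (mul_mem ?_ hx1F) (pow_mem hx2F 2))) (pow_mem hx2F 3)
      · simpa using hofn 27
      · simpa using hofn 2
      · simpa using hofn 9
      · simpa using hofn 2
  · have hy1G : y₁ ∈ adjoin k {y₁, y₂, y₃} := subset_adjoin k _ (by left; rfl)
    have hy2G : y₂ ∈ adjoin k {y₁, y₂, y₃} := subset_adjoin k _ (by right; left; rfl)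
    have hy3G : y₃ ∈ adjoin k {y₁, y₂, y₃} := subset_adjoin k _ (by right; right; rfl)
    have hofn : ∀ (n : ℕ),
        ((n : FractionRing (MvPolynomial (Fin 2) k)) ∈ adjoin k {y₁, y₂, y₃}) :=
      fun n => (adjoin k {y₁, y₂, y₃}).natCast_mem n
    rw [adjoin_le_iff]
    rintro z hz
    simp only [Set.mem_insert_iff, Set.mem_singleton_iff] at hz
    rcases hz with rfl | rfl
    · rw [hid1]
      refine div_mem ?_ ?_
      · refine add_mem (sub_mem (sub_mem (add_mem (sub_mem (mul_mem (neg_mem ?_) ?_) ?_) ?_) ?_)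
          ?_) ?_
        · simpa using hofn 2
        · exact pow_mem hy1G 3
        · exact mul_mem (by simpa using hofn 729) hy2G
        · exact mul_mem (mul_mem (by simpa using hofn 27) hy1G) hy2G
        · exact mul_mem (by simpa using hofn 2) (pow_mem hy2G 2)
        · exact mul_mem (by simpa using hofn 729) hy3G
        · exact mul_mem (mul_mem (by simpa using hofn 27) hy1G) hy3G
      · exact mul_mem (by simpa using hofn 108) (add_mem hy2G hy3G)
    · rw [hid2]
      refine div_mem ?_ ?_
      · refine add_mem (add_mem (add_mem (sub_mem (add_mem (mul_mem (neg_mem ?_) ?_) ?_) ?_)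
          ?_) ?_) ?_
        · simpa using hofn 2
        · exact pow_mem hy1G 4
        · exact mul_mem (mul_mem (by simpa using hofn 9) (pow_mem hy1G 2)) hy2G
        · exact mul_mem (mul_mem (by simpa using hofn 2) hy1G) (pow_mem hy2G 2)
        · exact mul_mem (mul_mem (by simpa using hofn 9) (pow_mem hy1G 2)) hy3G
        · exact mul_mem (mul_mem (by simpa using hofn 81) hy2G) hy3G
        · exact mul_mem (by simpa using hofn 81) (pow_mem hy3G 2)
      · exact mul_mem (by simpa using hofn 18) (sub_mem (pow_mem hy1G 3) (mul_mem hy2G hy3G))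
end

section
/- Let k be a field of characteristic ≠ 2, 3, and σ the Cremona involution of k(x₁,x₂) given by σ(x₁) = -x₁(3x₁-9x₂-x₂²)³/(27x₁+2x₁²+9x₁x₂+2x₁x₂²-x₂³)², σ(x₂) = -(3x₁+x₂²)(3x₁-9x₂-x₂²)/(27x₁+2x₁²+9x₁x₂+2x₁x₂²-x₂³). Then the elements w₁ = (3x₁-9x₂-x₂²)/(27+x₁+9x₂+x₂²) and w₂ = (27x₁+2x₁²+9x₁x₂+2x₁x₂²-x₂³)/(27x₁²+18x₁²x₂-27x₁x₂²+27x₂³+2x₁x₂³) are fixed by σ. -/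
open MvPolynomial

set_option maxHeartbeats 16000000 in
lemma cremona_aux {K : Type*} [Field K] (a b s1 s2 : K)
    (h1 : s1 = -a * (3*a - 9*b - b^2)^3 / (27*a + 2*a^2 + 9*a*b + 2*a*b^2 - b^3)^2)
    (h2 : s2 = -(3*a + b^2) * (3*a - 9*b - b^2) / (27*a + 2*a^2 + 9*a*b + 2*a*b^2 - b^3))
    (hD : (27*a + 2*a^2 + 9*a*b + 2*a*b^2 - b^3) ≠ 0)
    (hE : (27 + a + 9*b + b^2) ≠ 0)
    (hE2 : (27 + s1 + 9*s2 + s2^2) ≠ 0)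
    (hF : (27*a^2 + 18*a^2*b - 27*a*b^2 + 27*b^3 + 2*a*b^3) ≠ 0)
    (hF2 : (27*s1^2 + 18*s1^2*s2 - 27*s1*s2^2 + 27*s2^3 + 2*s1*s2^3) ≠ 0) :
    (3*s1 - 9*s2 - s2^2) / (27 + s1 + 9*s2 + s2^2)
        = (3*a - 9*b - b^2) / (27 + a + 9*b + b^2)
    ∧ (27*s1 + 2*s1^2 + 9*s1*s2 + 2*s1*s2^2 - s2^3)
        / (27*s1^2 + 18*s1^2*s2 - 27*s1*s2^2 + 27*s2^3 + 2*s1*s2^3)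
        = (27*a + 2*a^2 + 9*a*b + 2*a*b^2 - b^3)
        / (27*a^2 + 18*a^2*b - 27*a*b^2 + 27*b^3 + 2*a*b^3) := by
  have h5 : (27*a + 2*a^2 + 9*a*b + 2*a*b^2 - b^3)^5 ≠ 0 := pow_ne_zero _ hD
  have k1 : s1 * (27*a + 2*a^2 + 9*a*b + 2*a*b^2 - b^3)^2 = -a * (3*a - 9*b - b^2)^3 := by
    rw [h1, div_mul_cancel₀ _ (pow_ne_zero 2 hD)]
  have k2 : s2 * (27*a + 2*a^2 + 9*a*b + 2*a*b^2 - b^3) = -(3*a + b^2) * (3*a - 9*b - b^2) := by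
    rw [h2, div_mul_cancel₀ _ hD]
  have eU : (27*s1 + 2*s1^2 + 9*s1*s2 + 2*s1*s2^2 - s2^3)
      * (27*a + 2*a^2 + 9*a*b + 2*a*b^2 - b^3)^5
      = -39366*a^8*b^3 - 354294*a^8*b^2 - 1062882*a^8*b - 1062882*a^8 - 13122*a^7*b^5 + 98415*a^7*b^4 +
      944784*a^7*b^3 - 9565938*a^7*b - 14348907*a^7 + 24786*a^6*b^7 + 605799*a^6*b^6 +
      4782969*a^6*b^5 + 23029110*a^6*b^4 + 78653268*a^6*b^3 + 157837977*a^6*b^2 + 129140163*a^6*b -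
      2970*a^5*b^9 - 216513*a^5*b^8 - 3857868*a^5*b^7 - 29189889*a^5*b^6 - 128608722*a^5*b^5 -
      358722675*a^5*b^4 - 573956280*a^5*b^3 - 387420489*a^5*b^2 - 1458*a^4*b^11 - 34749*a^4*b^10 -
      40095*a^4*b^9 + 4113747*a^4*b^8 + 38086605*a^4*b^7 + 169529679*a^4*b^6 + 444816117*a^4*b^5 +
      645700815*a^4*b^4 + 387420489*a^4*b^3 + 90*a^3*b^13 + 8613*a^3*b^12 + 198288*a^3*b^11 +
      1876446*a^3*b^10 + 8660520*a^3*b^9 + 23383404*a^3*b^8 + 38263752*a^3*b^7 + 28697814*a^3*b^6 +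
      38*a^2*b^15 + 1485*a^2*b^14 + 19683*a^2*b^13 + 102060*a^2*b^12 + 157464*a^2*b^11 + 2*a*b^17 +
      45*a*b^16 + 108*a*b^15 - 3645*a*b^14 - 26244*a*b^13 - 39366*a*b^12 - 1*b^18 - 27*b^17 -
      243*b^16 - 729*b^15 := by
    have step : (27*s1 + 2*s1^2 + 9*s1*s2 + 2*s1*s2^2 - s2^3)
        * (27*a + 2*a^2 + 9*a*b + 2*a*b^2 - b^3)^5
        = 27*(s1 * (27*a + 2*a^2 + 9*a*b + 2*a*b^2 - b^3)^2)
            * (27*a + 2*a^2 + 9*a*b + 2*a*b^2 - b^3)^3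
          + 2*(s1 * (27*a + 2*a^2 + 9*a*b + 2*a*b^2 - b^3)^2)^2
            * (27*a + 2*a^2 + 9*a*b + 2*a*b^2 - b^3)
          + 9*(s1 * (27*a + 2*a^2 + 9*a*b + 2*a*b^2 - b^3)^2)
            * (s2 * (27*a + 2*a^2 + 9*a*b + 2*a*b^2 - b^3))
            * (27*a + 2*a^2 + 9*a*b + 2*a*b^2 - b^3)^2
          + 2*(s1 * (27*a + 2*a^2 + 9*a*b + 2*a*b^2 - b^3)^2)
            * (s2 * (27*a + 2*a^2 + 9*a*b + 2*a*b^2 - b^3))^2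
            * (27*a + 2*a^2 + 9*a*b + 2*a*b^2 - b^3)
          - (s2 * (27*a + 2*a^2 + 9*a*b + 2*a*b^2 - b^3))^3
            * (27*a + 2*a^2 + 9*a*b + 2*a*b^2 - b^3)^2 := by ring
    rw [step, k1, k2]
    ring
  have eV : (27*s1^2 + 18*s1^2*s2 - 27*s1*s2^2 + 27*s2^3 + 2*s1*s2^3)
      * (27*a + 2*a^2 + 9*a*b + 2*a*b^2 - b^3)^5
      = -354294*a^8*b^4 - 3720087*a^8*b^3 - 14348907*a^8*b^2 - 23914845*a^8*b - 14348907*a^8 +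
      196830*a^7*b^6 + 6200145*a^7*b^5 + 49424013*a^7*b^4 + 164746710*a^7*b^3 + 243931419*a^7*b^2 +
      129140163*a^7*b + 13122*a^6*b^8 - 1200663*a^6*b^7 - 31532166*a^6*b^6 - 223736661*a^6*b^5 -
      669615660*a^6*b^4 - 875283327*a^6*b^3 - 387420489*a^6*b^2 - 15066*a^5*b^10 - 477495*a^5*b^9 -
      1358127*a^5*b^8 + 51549777*a^5*b^7 + 413461098*a^5*b^6 + 1162261467*a^5*b^5 +
      1291401630*a^5*b^4 + 387420489*a^5*b^3 - 1026*a^4*b^12 + 43011*a^4*b^11 + 1679616*a^4*b^10 +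
      12793950*a^4*b^9 - 10628820*a^4*b^8 - 325241892*a^4*b^7 - 918330048*a^4*b^6 - 774840978*a^4*b^5
      + 378*a^3*b^14 + 17739*a^3*b^13 + 191727*a^3*b^12 - 314928*a^3*b^11 - 10097379*a^3*b^10 -
      4251528*a^3*b^9 + 186535791*a^3*b^8 + 516560652*a^3*b^7 + 387420489*a^3*b^6 + 54*a^2*b^16 +
      1323*a^2*b^15 + 4374*a^2*b^14 - 32805*a^2*b^13 + 905418*a^2*b^12 + 12754584*a^2*b^11 +
      43046721*a^2*b^10 + 43046721*a^2*b^9 + 2*a*b^18 + 27*a*b^17 + 243*a*b^16 + 12393*a*b^15 +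
      196830*a*b^14 + 1062882*a*b^13 + 1594323*a*b^12 + 27*b^18 + 729*b^17 + 6561*b^16 + 19683*b^15 := by
    have step : (27*s1^2 + 18*s1^2*s2 - 27*s1*s2^2 + 27*s2^3 + 2*s1*s2^3)
        * (27*a + 2*a^2 + 9*a*b + 2*a*b^2 - b^3)^5
        = 27*(s1 * (27*a + 2*a^2 + 9*a*b + 2*a*b^2 - b^3)^2)^2
            * (27*a + 2*a^2 + 9*a*b + 2*a*b^2 - b^3)
          + 18*(s1 * (27*a + 2*a^2 + 9*a*b + 2*a*b^2 - b^3)^2)^2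
            * (s2 * (27*a + 2*a^2 + 9*a*b + 2*a*b^2 - b^3))
          - 27*(s1 * (27*a + 2*a^2 + 9*a*b + 2*a*b^2 - b^3)^2)
            * (s2 * (27*a + 2*a^2 + 9*a*b + 2*a*b^2 - b^3))^2
            * (27*a + 2*a^2 + 9*a*b + 2*a*b^2 - b^3)
          + 27*(s2 * (27*a + 2*a^2 + 9*a*b + 2*a*b^2 - b^3))^3
            * (27*a + 2*a^2 + 9*a*b + 2*a*b^2 - b^3)^2
          + 2*(s1 * (27*a + 2*a^2 + 9*a*b + 2*a*b^2 - b^3)^2)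
            * (s2 * (27*a + 2*a^2 + 9*a*b + 2*a*b^2 - b^3))^3 := by ring
    rw [step, k1, k2]
    ring
  constructor
  · rw [div_eq_div_iff hE2 hE]
    apply mul_right_cancel₀ (pow_ne_zero 2 hD)
    linear_combination (3*(27 + a + 9*b + b^2) - (3*a - 9*b - b^2)) * k1 + (-9*(27*a + 2*a^2 + 9*a*b + 2*a*b^2 - b^3)*(27 + a + 9*b + b^2) - ((s2 * (27*a + 2*a^2 + 9*a*b + 2*a*b^2 - b^3)) + (-(3*a + b^2) * (3*a - 9*b - b^2)))*(27 + a + 9*b + b^2) - (3*a - 9*b - b^2)*(9*(27*a + 2*a^2 + 9*a*b + 2*a*b^2 - b^3) + (s2 * (27*a + 2*a^2 + 9*a*b + 2*a*b^2 - b^3)) + (-(3*a + b^2) * (3*a - 9*b - b^2)))) * k2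
  · have dU : 27*s1 + 2*s1^2 + 9*s1*s2 + 2*s1*s2^2 - s2^3
        = (-39366*a^8*b^3 - 354294*a^8*b^2 - 1062882*a^8*b - 1062882*a^8 - 13122*a^7*b^5 + 98415*a^7*b^4 +
      944784*a^7*b^3 - 9565938*a^7*b - 14348907*a^7 + 24786*a^6*b^7 + 605799*a^6*b^6 +
      4782969*a^6*b^5 + 23029110*a^6*b^4 + 78653268*a^6*b^3 + 157837977*a^6*b^2 + 129140163*a^6*b -
      2970*a^5*b^9 - 216513*a^5*b^8 - 3857868*a^5*b^7 - 29189889*a^5*b^6 - 128608722*a^5*b^5 -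
      358722675*a^5*b^4 - 573956280*a^5*b^3 - 387420489*a^5*b^2 - 1458*a^4*b^11 - 34749*a^4*b^10 -
      40095*a^4*b^9 + 4113747*a^4*b^8 + 38086605*a^4*b^7 + 169529679*a^4*b^6 + 444816117*a^4*b^5 +
      645700815*a^4*b^4 + 387420489*a^4*b^3 + 90*a^3*b^13 + 8613*a^3*b^12 + 198288*a^3*b^11 +
      1876446*a^3*b^10 + 8660520*a^3*b^9 + 23383404*a^3*b^8 + 38263752*a^3*b^7 + 28697814*a^3*b^6 +
      38*a^2*b^15 + 1485*a^2*b^14 + 19683*a^2*b^13 + 102060*a^2*b^12 + 157464*a^2*b^11 + 2*a*b^17 +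
      45*a*b^16 + 108*a*b^15 - 3645*a*b^14 - 26244*a*b^13 - 39366*a*b^12 - 1*b^18 - 27*b^17 -
      243*b^16 - 729*b^15) / (27*a + 2*a^2 + 9*a*b + 2*a*b^2 - b^3)^5 := by
      rw [eq_div_iff h5]; exact eU
    have dV : 27*s1^2 + 18*s1^2*s2 - 27*s1*s2^2 + 27*s2^3 + 2*s1*s2^3
        = (-354294*a^8*b^4 - 3720087*a^8*b^3 - 14348907*a^8*b^2 - 23914845*a^8*b - 14348907*a^8 +
      196830*a^7*b^6 + 6200145*a^7*b^5 + 49424013*a^7*b^4 + 164746710*a^7*b^3 + 243931419*a^7*b^2 +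
      129140163*a^7*b + 13122*a^6*b^8 - 1200663*a^6*b^7 - 31532166*a^6*b^6 - 223736661*a^6*b^5 -
      669615660*a^6*b^4 - 875283327*a^6*b^3 - 387420489*a^6*b^2 - 15066*a^5*b^10 - 477495*a^5*b^9 -
      1358127*a^5*b^8 + 51549777*a^5*b^7 + 413461098*a^5*b^6 + 1162261467*a^5*b^5 +
      1291401630*a^5*b^4 + 387420489*a^5*b^3 - 1026*a^4*b^12 + 43011*a^4*b^11 + 1679616*a^4*b^10 +
      12793950*a^4*b^9 - 10628820*a^4*b^8 - 325241892*a^4*b^7 - 918330048*a^4*b^6 - 774840978*a^4*b^5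
      + 378*a^3*b^14 + 17739*a^3*b^13 + 191727*a^3*b^12 - 314928*a^3*b^11 - 10097379*a^3*b^10 -
      4251528*a^3*b^9 + 186535791*a^3*b^8 + 516560652*a^3*b^7 + 387420489*a^3*b^6 + 54*a^2*b^16 +
      1323*a^2*b^15 + 4374*a^2*b^14 - 32805*a^2*b^13 + 905418*a^2*b^12 + 12754584*a^2*b^11 +
      43046721*a^2*b^10 + 43046721*a^2*b^9 + 2*a*b^18 + 27*a*b^17 + 243*a*b^16 + 12393*a*b^15 +
      196830*a*b^14 + 1062882*a*b^13 + 1594323*a*b^12 + 27*b^18 + 729*b^17 + 6561*b^16 + 19683*b^15) / (27*a + 2*a^2 + 9*a*b + 2*a*b^2 - b^3)^5 := by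
      rw [eq_div_iff h5]; exact eV
    rw [dU, dV, div_div_div_comm, div_self h5, div_one, div_eq_div_iff ?hV hF]
    · ring
    case hV =>
      rw [dV] at hF2
      exact fun h => hF2 (by rw [h, zero_div])

set_option synthInstance.maxHeartbeats 1000000 in
set_option maxHeartbeats 4000000 in
/-- w₁ and w₂ are fixed by the Cremona involution σ. -/
theorem stmt_4 (k : Type*) [Field k] (h2 : (2 : k) ≠ 0) (h3 : (3 : k) ≠ 0)
    (σ : FractionRing (MvPolynomial (Fin 2) k) ≃ₐ[k] FractionRing (MvPolynomial (Fin 2) k))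
    (hinv : ∀ f, σ (σ f) = f)
    (x₁ x₂ : FractionRing (MvPolynomial (Fin 2) k))
    (hx₁ : x₁ = algebraMap (MvPolynomial (Fin 2) k) _ (X 0))
    (hx₂ : x₂ = algebraMap (MvPolynomial (Fin 2) k) _ (X 1))
    (hσx₁ : σ x₁ = -x₁ * (3*x₁ - 9*x₂ - x₂^2)^3 / (27*x₁ + 2*x₁^2 + 9*x₁*x₂ + 2*x₁*x₂^2 - x₂^3)^2)
    (hσx₂ : σ x₂ = -(3*x₁ + x₂^2) * (3*x₁ - 9*x₂ - x₂^2) / (27*x₁ + 2*x₁^2 + 9*x₁*x₂ + 2*x₁*x₂^2 - x₂^3))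
    (w₁ w₂ : FractionRing (MvPolynomial (Fin 2) k))
    (hw₁ : w₁ = (3*x₁ - 9*x₂ - x₂^2) / (27 + x₁ + 9*x₂ + x₂^2))
    (hw₂ : w₂ = (27*x₁ + 2*x₁^2 + 9*x₁*x₂ + 2*x₁*x₂^2 - x₂^3) /
        (27*x₁^2 + 18*x₁^2*x₂ - 27*x₁*x₂^2 + 27*x₂^3 + 2*x₁*x₂^3)) :
    σ w₁ = w₁ ∧ σ w₂ = w₂ := by
  have hφ := IsFractionRing.injective (MvPolynomial (Fin 2) k)
      (FractionRing (MvPolynomial (Fin 2) k))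
  have h27 : (27 : k) ≠ 0 := by
    have h : (27 : k) = 3 ^ 3 := by norm_num
    rw [h]; exact pow_ne_zero _ h3
  have key : ∀ p : MvPolynomial (Fin 2) k, ∀ v : Fin 2 → k,
      MvPolynomial.eval v p ≠ 0 →
      algebraMap (MvPolynomial (Fin 2) k) (FractionRing (MvPolynomial (Fin 2) k)) p ≠ 0 := by
    intro p v hv hp
    apply hv
    have hp0 : p = 0 := hφ (by simpa using hp)
    simp [hp0]
  have hDne : (27*x₁ + 2*x₁^2 + 9*x₁*x₂ + 2*x₁*x₂^2 - x₂^3) ≠ 0 := by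
    have e : (27*x₁ + 2*x₁^2 + 9*x₁*x₂ + 2*x₁*x₂^2 - x₂^3)
        = algebraMap (MvPolynomial (Fin 2) k) _
        (27*X 0 + 2*(X 0)^2 + 9*(X 0)*(X 1) + 2*(X 0)*(X 1)^2 - (X 1)^3) := by
      simp only [hx₁, hx₂, map_sub, map_add, map_mul, map_pow, map_ofNat]
    rw [e]
    exact key _ ![0, 1] (by simp)
  have hEne : (27 + x₁ + 9*x₂ + x₂^2) ≠ 0 := by
    have e : (27 + x₁ + 9*x₂ + x₂^2) = algebraMap (MvPolynomial (Fin 2) k) _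
        (27 + X 0 + 9*X 1 + (X 1)^2) := by
      simp only [hx₁, hx₂, map_add, map_mul, map_pow, map_ofNat]
    rw [e]
    exact key _ ![0, 0] (by simpa using h27)
  have hFne : (27*x₁^2 + 18*x₁^2*x₂ - 27*x₁*x₂^2 + 27*x₂^3 + 2*x₁*x₂^3) ≠ 0 := by
    have e : (27*x₁^2 + 18*x₁^2*x₂ - 27*x₁*x₂^2 + 27*x₂^3 + 2*x₁*x₂^3)
        = algebraMap (MvPolynomial (Fin 2) k) _
        (27*(X 0)^2 + 18*(X 0)^2*(X 1) - 27*(X 0)*(X 1)^2 + 27*(X 1)^3 + 2*(X 0)*(X 1)^3) := by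
      simp only [hx₁, hx₂, map_sub, map_add, map_mul, map_pow, map_ofNat]
    rw [e]
    exact key _ ![0, 1] (by simpa using h27)
  have hE2 : (27 + σ x₁ + 9*(σ x₂) + (σ x₂)^2) ≠ 0 := by
    intro h0
    apply hEne
    have h' : σ (27 + x₁ + 9*x₂ + x₂^2) = 0 := by
      simp only [map_add, map_mul, map_pow, map_ofNat]; exact h0
    have h'' := DFunLike.congr_arg σ h'
    rw [hinv] at h''
    simpa using h''
  have hF2 : (27*(σ x₁)^2 + 18*(σ x₁)^2*(σ x₂) - 27*(σ x₁)*(σ x₂)^2 + 27*(σ x₂)^3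
      + 2*(σ x₁)*(σ x₂)^3) ≠ 0 := by
    intro h0
    apply hFne
    have h' : σ (27*x₁^2 + 18*x₁^2*x₂ - 27*x₁*x₂^2 + 27*x₂^3 + 2*x₁*x₂^3) = 0 := by
      simp only [map_sub, map_add, map_mul, map_pow, map_ofNat]; exact h0
    have h'' := DFunLike.congr_arg σ h'
    rw [hinv] at h''
    simpa using h''
  obtain ⟨e1, e2⟩ := cremona_aux x₁ x₂ (σ x₁) (σ x₂) hσx₁ hσx₂ hDne hEne hE2 hFne hF2
  constructor
  · rw [hw₁, map_div₀]
    simp only [map_sub, map_add, map_mul, map_pow, map_ofNat]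
    exact e1
  · rw [hw₂, map_div₀]
    simp only [map_sub, map_add, map_mul, map_pow, map_ofNat]
    exact e2
end

section
/- Let k be a field of characteristic 3 and σ the involution on k(x₁,x₂) given by σ(x₁) = x₁x₂⁶/(x₁²+x₁x₂²+x₂³)², σ(x₂) = -x₂⁴/(x₁²+x₁x₂²+x₂³). Setting y₁ = x₁x₂⁻², y₂ = x₂⁻¹, we have k(x₁,x₂) = k(y₁,y₂), σ(y₁) = y₁, and σ(y₂) = -y₂-y₁-y₁². -/
open MvPolynomial

/-- char 3 case; k(y₁,y₂) = k(x₁,x₂) and the action of σ on y₁, y₂. -/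
theorem stmt_8 (k : Type*) [Field k] [CharP k 3]
    (σ : FractionRing (MvPolynomial (Fin 2) k) ≃ₐ[k] FractionRing (MvPolynomial (Fin 2) k))
    (hinv : ∀ f, σ (σ f) = f)
    (x₁ x₂ : FractionRing (MvPolynomial (Fin 2) k))
    (hx₁ : x₁ = algebraMap (MvPolynomial (Fin 2) k) _ (X 0))
    (hx₂ : x₂ = algebraMap (MvPolynomial (Fin 2) k) _ (X 1))
    (hσx₁ : σ x₁ = x₁ * x₂^6 / (x₁^2 + x₁*x₂^2 + x₂^3)^2)
    (hσx₂ : σ x₂ = -x₂^4 / (x₁^2 + x₁*x₂^2 + x₂^3))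
    (y₁ y₂ : FractionRing (MvPolynomial (Fin 2) k))
    (hy₁ : y₁ = x₁ * (x₂^2)⁻¹) (hy₂ : y₂ = x₂⁻¹) :
    IntermediateField.adjoin k {y₁, y₂} = IntermediateField.adjoin k {x₁, x₂} ∧
      σ y₁ = y₁ ∧ σ y₂ = -y₂ - y₁ - y₁^2 := by
  have hx2 : x₂ ≠ 0 := by
    rw [hx₂, ne_eq, IsFractionRing.to_map_eq_zero_iff]
    exact MvPolynomial.X_ne_zero 1
  have hD : x₁^2 + x₁*x₂^2 + x₂^3 ≠ 0 := by
    intro h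
    apply hx2
    apply σ.injective
    rw [hσx₂, h, div_zero, map_zero]
  refine ⟨?_, ?_, ?_⟩
  · apply le_antisymm
    · rw [IntermediateField.adjoin_le_iff]
      have h1 : x₁ ∈ IntermediateField.adjoin k {x₁, x₂} :=
        IntermediateField.subset_adjoin k _ (Set.mem_insert _ _)
      have h2 : x₂ ∈ IntermediateField.adjoin k {x₁, x₂} :=
        IntermediateField.subset_adjoin k _ (Set.mem_insert_of_mem _ rfl)
      rintro z hz
      rcases hz with rfl | rfl
      · rw [hy₁]
        exact mul_mem h1 (inv_mem (pow_mem h2 2))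
      · rw [hy₂]
        exact inv_mem h2
    · rw [IntermediateField.adjoin_le_iff]
      have h1 : y₁ ∈ IntermediateField.adjoin k {y₁, y₂} :=
        IntermediateField.subset_adjoin k _ (Set.mem_insert _ _)
      have h2 : y₂ ∈ IntermediateField.adjoin k {y₁, y₂} :=
        IntermediateField.subset_adjoin k _ (Set.mem_insert_of_mem _ rfl)
      have hx2y : x₂ = y₂⁻¹ := by rw [hy₂, inv_inv]
      have hx1y : x₁ = y₁ * (y₂⁻¹)^2 := by
        rw [hy₁, hy₂, inv_inv]
        field_simp
      rintro z hz
      rcases hz with rfl | rfl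
      · rw [hx1y]
        exact mul_mem h1 (pow_mem (inv_mem h2) 2)
      · rw [hx2y]
        exact inv_mem h2
  · rw [hy₁, map_mul, map_inv₀, map_pow, hσx₁, hσx₂]
    field_simp
    rw [mul_div_assoc, div_self (by contrapose! hD; linear_combination hD), mul_one]
  · rw [hy₂, map_inv₀, hσx₂, hy₁]
    field_simp
    ring
end

section
/- Let k be a field of characteristic 2 and define in k[x₁,x₂]: y₁ = x₁, y₂ = x₁+x₂+x₂², y₃ = x₁+x₁x₂+x₂³. Then the polynomial identity y₁+y₁y₂²+y₂³+y₃+y₂y₃+y₃² = 0 holds, and x₂ = (y₂+y₃)/(1+y₂) in k(x₁,x₂), so k(y₁,y₂,y₃) = k(x₁,x₂). -/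
open MvPolynomial

set_option maxHeartbeats 1000000
set_option synthInstance.maxHeartbeats 400000

/-- char 2; the polynomial relation among y₁, y₂, y₃ and the
    recovery of x₂, so that k(y₁,y₂,y₃) = k(x₁,x₂). -/
theorem stmt_14 (k : Type*) [Field k] [CharP k 2]
    (y₁ y₂ y₃ : MvPolynomial (Fin 2) k)
    (hy₁ : y₁ = X 0)
    (hy₂ : y₂ = X 0 + X 1 + (X 1)^2)
    (hy₃ : y₃ = X 0 + X 0 * X 1 + (X 1)^3) :
    y₁ + y₁*y₂^2 + y₂^3 + y₃ + y₂*y₃ + y₃^2 = 0 ∧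
    (algebraMap (MvPolynomial (Fin 2) k) (FractionRing (MvPolynomial (Fin 2) k)) (X 1) =
      (algebraMap _ _ y₂ + algebraMap _ _ y₃) / (1 + algebraMap _ _ y₂)) ∧
    IntermediateField.adjoin k
        {algebraMap (MvPolynomial (Fin 2) k) (FractionRing (MvPolynomial (Fin 2) k)) y₁,
         algebraMap _ _ y₂, algebraMap _ _ y₃} =
      IntermediateField.adjoin k
        {algebraMap (MvPolynomial (Fin 2) k) (FractionRing (MvPolynomial (Fin 2) k)) (X 0),
         algebraMap _ _ (X 1 : MvPolynomial (Fin 2) k)} := by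
  subst hy₁ hy₂ hy₃
  have h2 : (2 : MvPolynomial (Fin 2) k) = 0 := by
    exact_mod_cast CharP.cast_eq_zero (MvPolynomial (Fin 2) k) 2
  set R := MvPolynomial (Fin 2) k
  set K := FractionRing R
  set f : R →+* K := algebraMap R K with hf
  have hfinj : Function.Injective f := IsFractionRing.injective R K
  -- Part 1
  have part1 : (X 0 : R) + X 0 * (X 0 + X 1 + (X 1)^2)^2 + (X 0 + X 1 + (X 1)^2)^3 +
      (X 0 + X 0 * X 1 + (X 1)^3) + (X 0 + X 1 + (X 1)^2) * (X 0 + X 0 * X 1 + (X 1)^3) +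
      (X 0 + X 0 * X 1 + (X 1)^3)^2 = 0 := by
    linear_combination (X 0 + (X 0)^3 + 4*(X 0)^2*(X 1) + 3*(X 0)^2*(X 1)^2 +
      3*(X 0)*(X 1)^2 + 6*(X 0)*(X 1)^3 + 3*(X 0)*(X 1)^4 + (X 1)^3 + 2*(X 1)^4 +
      2*(X 1)^5 + (X 1)^6 + (X 0)*(X 1) + (X 0)^2 : R) * h2
  -- key polynomial identity: X 1 * (1 + y₂) = y₂ + y₃
  have key : (X 1 : R) * (1 + (X 0 + X 1 + (X 1)^2)) =
      (X 0 + X 1 + (X 1)^2) + (X 0 + X 0 * X 1 + (X 1)^3) := by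
    linear_combination (-(X 0) : R) * h2
  have hne : (1 + (X 0 + X 1 + (X 1)^2) : R) ≠ 0 := by
    intro h
    have hc := congrArg MvPolynomial.constantCoeff h
    simp at hc
  have hden : (1 : K) + f (X 0 + X 1 + (X 1)^2) ≠ 0 := by
    rw [← f.map_one, ← f.map_add]
    intro h
    exact hne (hfinj (by simpa using h))
  have part2 : f (X 1) = (f (X 0 + X 1 + (X 1)^2) + f (X 0 + X 0 * X 1 + (X 1)^3)) /
      (1 + f (X 0 + X 1 + (X 1)^2)) := by
    rw [eq_div_iff hden, ← f.map_one, ← f.map_add, ← f.map_mul, ← f.map_add]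
    exact congrArg f key
  refine ⟨part1, part2, ?_⟩
  -- Part 3
  apply le_antisymm
  · apply IntermediateField.adjoin_le_iff.2
    intro z hz
    have hx0 : f (X 0) ∈ IntermediateField.adjoin k
        {f (X 0), f (X 1 : R)} :=
      IntermediateField.subset_adjoin _ _ (by left; rfl)
    have hx1 : f (X 1 : R) ∈ IntermediateField.adjoin k
        {f (X 0), f (X 1 : R)} :=
      IntermediateField.subset_adjoin _ _ (by right; rfl)
    rcases hz with rfl | rfl | rfl
    · exact hx0
    · simpa using add_mem (add_mem hx0 hx1) (pow_mem hx1 2)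
    · simpa using add_mem (add_mem hx0 (mul_mem hx0 hx1)) (pow_mem hx1 3)
  · apply IntermediateField.adjoin_le_iff.2
    intro z hz
    set F := IntermediateField.adjoin k
        {f (X 0), f (X 0 + X 1 + (X 1)^2), f (X 0 + X 0 * X 1 + (X 1)^3)}
    have h1 : f (X 0) ∈ F := IntermediateField.subset_adjoin _ _ (by left; rfl)
    have h2' : f (X 0 + X 1 + (X 1)^2) ∈ F :=
      IntermediateField.subset_adjoin _ _ (by right; left; rfl)
    have h3 : f (X 0 + X 0 * X 1 + (X 1)^3) ∈ F :=
      IntermediateField.subset_adjoin _ _ (by right; right; rfl)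
    have hx1F : f (X 1 : R) ∈ F := by
      rw [part2]
      exact div_mem (add_mem h2' h3) (add_mem (one_mem F) h2')
    rcases hz with rfl | rfl
    · exact h1
    · exact hx1F
end

section
/- Let k be a field of characteristic 3 and σ the involution of k(x₁,x₂) from the char-3 case. With y₁=x₁, y₂=-x₂, y₃=x₁²+x₁x₂²+x₂³, we have σ(y₁)=y₁y₂⁶y₃⁻², σ(y₂)=y₂⁴y₃⁻¹, σ(y₃)=y₂¹⁵y₃⁻⁴. -/
open MvPolynomial

set_option maxHeartbeats 1600000 in
set_option synthInstance.maxHeartbeats 400000 in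
/-- char 3; the action of σ on y₁, y₂, y₃. -/
theorem stmt_16 (k : Type*) [Field k] [CharP k 3]
    (σ : FractionRing (MvPolynomial (Fin 2) k) ≃ₐ[k] FractionRing (MvPolynomial (Fin 2) k))
    (hinv : ∀ f, σ (σ f) = f)
    (x₁ x₂ : FractionRing (MvPolynomial (Fin 2) k))
    (hx₁ : x₁ = algebraMap (MvPolynomial (Fin 2) k) _ (X 0))
    (hx₂ : x₂ = algebraMap (MvPolynomial (Fin 2) k) _ (X 1))
    (hσx₁ : σ x₁ = x₁ * x₂^6 / (x₁^2 + x₁*x₂^2 + x₂^3)^2)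
    (hσx₂ : σ x₂ = -x₂^4 / (x₁^2 + x₁*x₂^2 + x₂^3))
    (y₁ y₂ y₃ : FractionRing (MvPolynomial (Fin 2) k))
    (hy₁ : y₁ = x₁) (hy₂ : y₂ = -x₂) (hy₃ : y₃ = x₁^2 + x₁*x₂^2 + x₂^3) :
    σ y₁ = y₁ * y₂^6 * (y₃⁻¹)^2 ∧ σ y₂ = y₂^4 * y₃⁻¹ ∧ σ y₃ = y₂^15 * (y₃⁻¹)^4 := by
  have hne : x₁^2 + x₁*x₂^2 + x₂^3 ≠ 0 := by
    have key : algebraMap (MvPolynomial (Fin 2) k) (FractionRing (MvPolynomial (Fin 2) k))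
        (X 0 ^ 2 + X 0 * X 1 ^ 2 + X 1 ^ 3) = x₁^2 + x₁*x₂^2 + x₂^3 := by
      simp only [map_add, map_mul, map_pow, hx₁, hx₂]
    rw [← key, Ne, IsFractionRing.to_map_eq_zero_iff]
    intro h
    have := congrArg (eval (fun i => if i = 0 then (0 : k) else 1)) h
    simp at this
  have h6 : (-x₂)^6 = x₂^6 := by ring
  have h4 : (-x₂)^4 = x₂^4 := by ring
  have h15 : (-x₂)^15 = -x₂^15 := by ring
  refine ⟨?_, ?_, ?_⟩
  · rw [hy₁, hy₂, hy₃, hσx₁, div_eq_mul_inv, inv_pow, h6]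
  · rw [hy₂, hy₃, map_neg, hσx₂, neg_div, neg_neg, div_eq_mul_inv, h4]
  · rw [hy₂, hy₃, map_add, map_add, map_mul, map_pow, map_pow, map_pow, hσx₁, hσx₂,
      h15, inv_pow]
    field_simp [hne]
    ring
end

section
/- Let k be a field of characteristic ≠ 2,3, and let u₁,u₂,u₃ satisfy the relation 108u₁u₂-729u₁²u₂-16u₂²-108u₁u₃-729u₁²u₃+32u₂u₃-16u₃²-108u₂u₃²+1458u₁u₂u₃²+108u₃³+1458u₁u₃³-729u₂u₃⁴-729u₃⁵ = 0 in a field extension of k with u₃ ≠ 0. Setting v₁=u₁/u₃, v₂=u₂/u₃, w₁ = v₁-u₃, w₂ = v₂-1, w₃ = u₃, the relation becomes 108w₁w₂-16w₂²-1458w₁²w₃-729w₁²w₂w₃ = 0; consequently if w₁² (2+w₂) ≠ 0 then w₃ = (108w₁w₂-16w₂²)/(729w₁²(2+w₂)) ∈ k(w₁,w₂). -/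
/-- simplification of the quintic relation in u₁, u₂, u₃ via the
    substitution v₁ = u₁/u₃, v₂ = u₂/u₃, w₁ = v₁-u₃, w₂ = v₂-1, w₃ = u₃. -/
theorem stmt_19 (k : Type*) [Field k] (h2 : (2 : k) ≠ 0) (h3 : (3 : k) ≠ 0)
    (K : Type*) [Field K] [Algebra k K]
    (u₁ u₂ u₃ : K) (hu₃ : u₃ ≠ 0)
    (hrel : 108*u₁*u₂ - 729*u₁^2*u₂ - 16*u₂^2 - 108*u₁*u₃ - 729*u₁^2*u₃ + 32*u₂*u₃
      - 16*u₃^2 - 108*u₂*u₃^2 + 1458*u₁*u₂*u₃^2 + 108*u₃^3 + 1458*u₁*u₃^3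
      - 729*u₂*u₃^4 - 729*u₃^5 = 0)
    (v₁ v₂ w₁ w₂ w₃ : K)
    (hv₁ : v₁ = u₁ / u₃) (hv₂ : v₂ = u₂ / u₃)
    (hw₁ : w₁ = v₁ - u₃) (hw₂ : w₂ = v₂ - 1) (hw₃ : w₃ = u₃) :
    108*w₁*w₂ - 16*w₂^2 - 1458*w₁^2*w₃ - 729*w₁^2*w₂*w₃ = 0 ∧
    (w₁^2 * (2 + w₂) ≠ 0 → w₃ = (108*w₁*w₂ - 16*w₂^2) / (729*w₁^2*(2 + w₂))) := by
  have h3K : (3 : K) ≠ 0 := fun h =>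
    h3 ((algebraMap k K).injective (by rw [map_ofNat, map_zero]; exact h))
  have h729 : (729 : K) ≠ 0 := by
    have : (729 : K) = 3 ^ 6 := by norm_num
    rw [this]
    exact pow_ne_zero _ h3K
  subst hv₁ hv₂ hw₁ hw₂
  rw [hw₃]
  have key : 108*(u₁/u₃-u₃)*(u₂/u₃-1) - 16*(u₂/u₃-1)^2 - 1458*(u₁/u₃-u₃)^2*u₃
      - 729*(u₁/u₃-u₃)^2*(u₂/u₃-1)*u₃ = 0 := by
    field_simp
    linear_combination hrel
  refine ⟨key, fun hne => ?_⟩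
  have hden : 729*(u₁/u₃-u₃)^2*(2 + (u₂/u₃-1)) ≠ 0 := by
    rw [mul_assoc]
    exact mul_ne_zero h729 hne
  rw [eq_div_iff hden]
  linear_combination -key
end
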